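/- Let m be a positive integer, let a_1, ..., a_q be the distinct elements of F_q, and let G_q(x_0, ..., x_m) = (x_1 - a_1 x_0)···(x_1 - a_q x_0). Then the homogeneous polynomial G_{q+1} := x_0 · G_q of degree d = q+1 has exactly d·q^{m-1} + p_{m-2} = (q+1)q^{m-1} + p_{m-2} zeros in the projective space P^m(F_q). -/
import Mathlib


/-- `pj q j` is `p_j = q^j + q^(j-1) + ... + q + 1` for `j ≥ 0` and `p_j = 0` for `j < 0`. -/
def pj (q : ℕ) (j : ℤ) : ℕ := if 0 ≤ j then ∑ i ∈ Finset.range (j.toNat + 1), q ^ i else 0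

/-- The set of points of the projective space `P^{n-1}(F)` at which a (homogeneous)
polynomial `f` in `n` variables vanishes. -/
def projZeros {F : Type*} [Field F] {n : ℕ} (f : MvPolynomial (Fin n) F) :
    Set (Projectivization F (Fin n → F)) :=
  {P | MvPolynomial.eval P.rep f = 0}

private lemma geom_aux (q : ℕ) (hq : 1 ≤ q) (n : ℕ) :
    (q - 1) * (∑ i ∈ Finset.range n, q ^ i) + 1 = q ^ n := by
  induction n with
  | zero => simp
  | succ n ih =>
    rw [Finset.sum_range_succ, Nat.mul_add, pow_succ]
    have h1 : 1 + (q - 1) = q := by omega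
    calc (q - 1) * (∑ i ∈ Finset.range n, q ^ i) + (q - 1) * q ^ n + 1
        = ((q - 1) * (∑ i ∈ Finset.range n, q ^ i) + 1) + (q - 1) * q ^ n := by ring
      _ = q ^ n + (q - 1) * q ^ n := by rw [ih]
      _ = (1 + (q - 1)) * q ^ n := by ring
      _ = q ^ n * q := by rw [h1]; ring

private lemma card_proj {F : Type*} [Field F] [Fintype F] (q : ℕ) (hq : q = Fintype.card F)
    (n : ℕ) :
    Nat.card (Projectivization F (Fin n → F)) * (q - 1) = q ^ n - 1 := by
  classical
  have hb : Function.Bijective (fun x : Projectivization F (Fin n → F) × Fˣ =>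
      (⟨(x.2 : F) • x.1.rep,
        smul_ne_zero (Units.ne_zero x.2) x.1.rep_nonzero⟩ : {v : Fin n → F // v ≠ 0})) := by
    constructor
    · rintro ⟨P, t⟩ ⟨Q, s⟩ h
      simp only [Subtype.mk.injEq] at h
      have hPQ : P = Q := by
        rw [← P.mk_rep, ← Q.mk_rep, Projectivization.mk_eq_mk_iff']
        refine ⟨(t : F)⁻¹ * (s : F), ?_⟩
        rw [mul_smul, ← h, inv_smul_smul₀ (Units.ne_zero t)]
      subst hPQ
      have hts : ((t : F) - (s : F)) • P.rep = 0 := by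
        rw [sub_smul, h, sub_self]
      rcases smul_eq_zero.mp hts with h' | h'
      · have : (t : F) = (s : F) := by rwa [sub_eq_zero] at h'
        exact Prod.ext rfl (Units.ext this)
      · exact absurd h' P.rep_nonzero
    · rintro ⟨v, hv⟩
      obtain ⟨c, hc⟩ := Projectivization.exists_smul_eq_mk_rep F v hv
      refine ⟨⟨Projectivization.mk F v hv, c⁻¹⟩, Subtype.ext ?_⟩
      simp only
      rw [← hc, Units.smul_def, smul_smul, Units.inv_mul, one_smul]
  have h1 : Nat.card ({v : Fin n → F // v ≠ 0}) = q ^ n - 1 := by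
    rw [Nat.card_eq_fintype_card]
    have : Fintype.card {v : Fin n → F // ¬ v = 0} =
        Fintype.card (Fin n → F) - Fintype.card {v : Fin n → F // v = 0} :=
      Fintype.card_subtype_compl _
    rw [this, Fintype.card_subtype_eq (0 : Fin n → F), Fintype.card_fun, Fintype.card_fin, hq]
  have h2 := Nat.card_eq_of_bijective _ hb
  rw [Nat.card_prod, Nat.card_eq_fintype_card (α := Fˣ), Fintype.card_units, ← hq, h1] at h2
  exact h2

/-- Let `a_1, ..., a_q` be the distinct elements of `F_q` and
`G_q = (x_1 - a_1 x_0) ⋯ (x_1 - a_q x_0)`.  Then the homogeneous polynomial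
`G_{q+1} = x_0 ⬝ G_q` of degree `d = q + 1` has exactly `d⬝q^(m-1) + p_{m-2}` zeros
in `P^m(F_q)`. -/
theorem stmt_6 {F : Type*} [Field F] [Fintype F] (q : ℕ) (hq : q = Fintype.card F)
    (m : ℕ) (hm : 0 < m) (a : Fin q → F) (ha : Function.Bijective a) :
    (projZeros (MvPolynomial.X (⟨0, by omega⟩ : Fin (m + 1)) *
        ∏ i : Fin q,
          (MvPolynomial.X (⟨1, by omega⟩ : Fin (m + 1)) -
            MvPolynomial.C (a i) * MvPolynomial.X (⟨0, by omega⟩ : Fin (m + 1))))).ncard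
      = (q + 1) * q ^ (m - 1) + pj q ((m : ℤ) - 2) := by
  classical
  have hq2 : 2 ≤ q := by rw [hq]; exact Fintype.one_lt_card
  -- Step 1: the zero set is everything.
  have hset : projZeros (MvPolynomial.X (⟨0, by omega⟩ : Fin (m + 1)) *
        ∏ i : Fin q,
          (MvPolynomial.X (⟨1, by omega⟩ : Fin (m + 1)) -
            MvPolynomial.C (a i) * MvPolynomial.X (⟨0, by omega⟩ : Fin (m + 1))))
      = Set.univ := by
    ext P
    simp only [projZeros, Set.mem_setOf_eq, Set.mem_univ, iff_true]
    rw [map_mul, MvPolynomial.eval_X]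
    by_cases h0 : P.rep ⟨0, by omega⟩ = 0
    · rw [h0, zero_mul]
    · rw [map_prod]
      obtain ⟨i, hi⟩ := ha.2 (P.rep ⟨1, by omega⟩ / P.rep ⟨0, by omega⟩)
      refine mul_eq_zero_of_right _ (Finset.prod_eq_zero (Finset.mem_univ i) ?_)
      rw [map_sub, map_mul, MvPolynomial.eval_X, MvPolynomial.eval_X, MvPolynomial.eval_C,
        hi, div_mul_cancel₀ _ h0, sub_self]
  rw [hset, Set.ncard_univ]
  -- Step 2: arithmetic.
  have hR : (q - 1) * ((q + 1) * q ^ (m - 1) + pj q ((m : ℤ) - 2)) + 1 = q ^ (m + 1) := by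
    rcases Nat.lt_or_ge m 2 with hm2 | hm2
    · -- m = 1
      interval_cases m
      have hpj : pj q ((1 : ℕ) - 2 : ℤ) = 0 := by norm_num [pj]
      rw [hpj]
      obtain ⟨k, rfl⟩ : ∃ k, q = k + 1 := ⟨q - 1, by omega⟩
      simp only [Nat.add_sub_cancel]
      ring
    · obtain ⟨n, rfl⟩ : ∃ n, m = n + 2 := ⟨m - 2, by omega⟩
      have hpj : pj q ((n + 2 : ℕ) - 2 : ℤ) = ∑ i ∈ Finset.range (n + 1), q ^ i := by
        have h : ((n + 2 : ℕ) : ℤ) - 2 = (n : ℤ) := by push_cast; ring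
        rw [h, pj, if_pos (Int.natCast_nonneg n), Int.toNat_natCast]
      rw [hpj]
      have gs := geom_aux q (by omega) (n + 1)
      have hm1 : n + 2 - 1 = n + 1 := by omega
      rw [hm1]
      obtain ⟨k, rfl⟩ : ∃ k, q = k + 1 := ⟨q - 1, by omega⟩
      simp only [Nat.add_sub_cancel] at gs ⊢
      calc k * ((k + 1 + 1) * (k + 1) ^ (n + 1) + ∑ i ∈ Finset.range (n + 1), (k + 1) ^ i) + 1
          = (k * (k + 2)) * (k + 1) ^ (n + 1)
            + (k * (∑ i ∈ Finset.range (n + 1), (k + 1) ^ i) + 1) := by ring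
        _ = (k * (k + 2)) * (k + 1) ^ (n + 1) + (k + 1) ^ (n + 1) := by rw [gs]
        _ = (k + 1) ^ (n + 2 + 1) := by ring
  have e1 : Nat.card (Projectivization F (Fin (m + 1) → F)) * (q - 1) = q ^ (m + 1) - 1 :=
    card_proj q hq (m + 1)
  have e2 : ((q + 1) * q ^ (m - 1) + pj q ((m : ℤ) - 2)) * (q - 1) = q ^ (m + 1) - 1 := by
    rw [mul_comm]
    exact Nat.eq_sub_of_add_eq hR
  exact Nat.eq_of_mul_eq_mul_right (by omega) (e1.trans e2.symm)
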